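/- Let γ be a smooth path of duration t and let ξ, ζ be smooth based loops of duration t. Then h_γ(ξ,ζ) = −∫_0^t Σ_i ξ^i(τ) D_γ[ζ]^i(τ) dτ = −∫_0^t Σ_i D_γ[ξ]^i(τ) ζ^i(τ) dτ. In particular, the Jacobi operator D_γ is formally self-adjoint on based loops: ∫_0^t Σ_i ξ^i D_γ[ζ]^i dτ = ∫_0^t Σ_i D_γ[ξ]^i ζ^i dτ. -/

import Mathlib

open MeasureTheory Set
open scoped BigOperators

noncomputable section

/-- Partial derivative of `f : ℝⁿ → ℝ` in the `j`-th coordinate direction. -/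
def pd {n : ℕ} (f : (Fin n → ℝ) → ℝ) (j : Fin n) (q : Fin n → ℝ) : ℝ :=
  fderiv ℝ f q (Pi.single j 1)

/-- The classical equation of motion on the time interval `[0, t]`. -/
def IsClassical {n : ℕ} (B : Fin n → (Fin n → ℝ) → ℝ) (C : (Fin n → ℝ) → ℝ)
    (t : ℝ) (γ : ℝ → Fin n → ℝ) : Prop :=
  ∀ τ ∈ Icc (0:ℝ) t, ∀ i,
    deriv (deriv γ) τ i
      + (∑ j, (pd (B i) j (γ τ) - pd (B j) i (γ τ)) * deriv γ τ j)
      + pd C i (γ τ) = 0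

/-- The Jacobi operator `D_γ` (linearization of the equation of motion along `γ`). -/
def Jacobi {n : ℕ} (B : Fin n → (Fin n → ℝ) → ℝ) (C : (Fin n → ℝ) → ℝ)
    (γ ξ : ℝ → Fin n → ℝ) (τ : ℝ) (i : Fin n) : ℝ :=
  deriv (deriv ξ) τ i
    + (∑ j, (pd (B i) j (γ τ) - pd (B j) i (γ τ)) * deriv ξ τ j)
    + ∑ j, ((∑ k, pd (fun q => pd (B i) k q - pd (B k) i q) j (γ τ) * deriv γ τ k)
        + pd (pd C i) j (γ τ)) * ξ τ j

/-- A classical path of duration `t` is nondegenerate if the only smooth based loop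
annihilated by the Jacobi operator vanishes identically on `[0,t]`. -/
def Nondegenerate {n : ℕ} (B : Fin n → (Fin n → ℝ) → ℝ) (C : (Fin n → ℝ) → ℝ)
    (t : ℝ) (γ : ℝ → Fin n → ℝ) : Prop :=
  ∀ ξ : ℝ → Fin n → ℝ, ContDiff ℝ (⊤ : ℕ∞) ξ → ξ 0 = 0 → ξ t = 0 →
    (∀ τ ∈ Icc (0:ℝ) t, ∀ i, Jacobi B C γ ξ τ i = 0) →
    ∀ τ ∈ Icc (0:ℝ) t, ξ τ = 0

/-- The action of a path of duration `t`. -/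
def action {n : ℕ} (B : Fin n → (Fin n → ℝ) → ℝ) (C : (Fin n → ℝ) → ℝ)
    (t : ℝ) (γ : ℝ → Fin n → ℝ) : ℝ :=
  ∫ τ in (0:ℝ)..t,
    ((1:ℝ)/2 * ∑ i, deriv γ τ i ^ 2 + ∑ i, B i (γ τ) * deriv γ τ i - C (γ τ))

/-- A smooth family of nondegenerate classical paths with boundary values
`(t, q₀, q₁)` ranging over an open set `O ⊆ ℝ_{>0} × ℝⁿ × ℝⁿ`. -/
structure SmoothFamily {n : ℕ} (B : Fin n → (Fin n → ℝ) → ℝ) (C : (Fin n → ℝ) → ℝ)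
    (O : Set (ℝ × (Fin n → ℝ) × (Fin n → ℝ))) where
  f : ℝ → ℝ → (Fin n → ℝ) → (Fin n → ℝ) → Fin n → ℝ
  isOpen : IsOpen O
  pos : ∀ p ∈ O, 0 < p.1
  smooth : ContDiffOn ℝ (⊤ : ℕ∞)
      (fun p : ℝ × ℝ × (Fin n → ℝ) × (Fin n → ℝ) => f p.1 p.2.1 p.2.2.1 p.2.2.2)
      {p : ℝ × ℝ × (Fin n → ℝ) × (Fin n → ℝ) | p.2 ∈ O ∧ p.1 ∈ Icc 0 p.2.1}
  pathSmooth : ∀ p ∈ O, ContDiff ℝ (⊤ : ℕ∞) fun τ => f τ p.1 p.2.1 p.2.2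
  isClassical : ∀ p ∈ O, IsClassical B C p.1 fun τ => f τ p.1 p.2.1 p.2.2
  nondeg : ∀ p ∈ O, Nondegenerate B C p.1 fun τ => f τ p.1 p.2.1 p.2.2
  bdry0 : ∀ p ∈ O, f 0 p.1 p.2.1 p.2.2 = p.2.1
  bdry1 : ∀ p ∈ O, f p.1 p.1 p.2.1 p.2.2 = p.2.2

/-- The Hamilton function of a smooth family of classical paths. -/
def famS {n : ℕ} {B : Fin n → (Fin n → ℝ) → ℝ} {C : (Fin n → ℝ) → ℝ}
    {O : Set (ℝ × (Fin n → ℝ) × (Fin n → ℝ))} (F : SmoothFamily B C O)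
    (t : ℝ) (q0 q1 : Fin n → ℝ) : ℝ :=
  action B C t fun τ => F.f τ t q0 q1

/-- The mixed Hessian `(l, m) ↦ ∂²S/∂q₀^l∂q₁^m`. -/
def Hess01 {n : ℕ} (S : ℝ → (Fin n → ℝ) → (Fin n → ℝ) → ℝ)
    (t : ℝ) (q0 q1 : Fin n → ℝ) : Matrix (Fin n) (Fin n) ℝ :=
  Matrix.of fun l m =>
    fderiv ℝ (fun q0' => fderiv ℝ (fun q1' => S t q0' q1') q1 (Pi.single m 1)) q0
      (Pi.single l 1)

/-- Heaviside's step function, with `Θ 0 = 1/2`. -/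
def Heav (x : ℝ) : ℝ := if x < 0 then 0 else if x = 0 then 1/2 else 1

/-- The Green's kernel `G_γ` of a smooth family of nondegenerate classical paths. -/
def Green {n : ℕ} {B : Fin n → (Fin n → ℝ) → ℝ} {C : (Fin n → ℝ) → ℝ}
    {O : Set (ℝ × (Fin n → ℝ) × (Fin n → ℝ))} (F : SmoothFamily B C O)
    (t : ℝ) (q0 q1 : Fin n → ℝ) (ς τ : ℝ) (i j : Fin n) : ℝ :=
  Heav (ς - τ) * ∑ k, ∑ l,
      fderiv ℝ (fun q => F.f ς t q q1 i) q0 (Pi.single k 1)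
        * ((Hess01 (fun a b c => -(famS F a b c)) t q0 q1).transpose)⁻¹ k l
        * fderiv ℝ (fun q => F.f τ t q0 q j) q1 (Pi.single l 1)
  + Heav (τ - ς) * ∑ k, ∑ l,
      fderiv ℝ (fun q => F.f ς t q0 q i) q1 (Pi.single k 1)
        * (Hess01 (fun a b c => -(famS F a b c)) t q0 q1)⁻¹ k l
        * fderiv ℝ (fun q => F.f τ t q q1 j) q0 (Pi.single l 1)

/-- The Hessian of the action at a path `γ` of duration `t`, as a bilinear form. -/
def hess {n : ℕ} (B : Fin n → (Fin n → ℝ) → ℝ) (C : (Fin n → ℝ) → ℝ)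
    (t : ℝ) (γ ξ ζ : ℝ → Fin n → ℝ) : ℝ :=
  ∫ τ in (0:ℝ)..t,
    ((∑ i, deriv ξ τ i * deriv ζ τ i)
      + (∑ i, ∑ j, pd (B i) j (γ τ) * (deriv ξ τ i * ζ τ j + deriv ζ τ i * ξ τ j))
      + ∑ j, ∑ k,
          ((∑ i, pd (pd (B i) j) k (γ τ) * deriv γ τ i) - pd (pd C j) k (γ τ))
            * (ξ τ j * ζ τ k))

/-- The Jacobi fields `∂γ/∂q_a^j` of a smooth family (`a = 0` or `a = 1`). -/
def jfield {n : ℕ} {B : Fin n → (Fin n → ℝ) → ℝ} {C : (Fin n → ℝ) → ℝ}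
    {O : Set (ℝ × (Fin n → ℝ) × (Fin n → ℝ))} (F : SmoothFamily B C O)
    (t : ℝ) (q0 q1 : Fin n → ℝ) (a : Fin 2) (j : Fin n) : ℝ → Fin n → ℝ :=
  fun τ i =>
    if a = 0 then fderiv ℝ (fun q => F.f τ t q q1 i) q0 (Pi.single j 1)
    else fderiv ℝ (fun q => F.f τ t q0 q i) q1 (Pi.single j 1)

/-- Partial derivative of a function of `(t, q₀, q₁)` in the direction `q_a^j`. -/
def pdS {n : ℕ} (S : ℝ → (Fin n → ℝ) → (Fin n → ℝ) → ℝ) (a : Fin 2) (j : Fin n)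
    (t : ℝ) (q0 q1 : Fin n → ℝ) : ℝ :=
  if a = 0 then fderiv ℝ (fun q => S t q q1) q0 (Pi.single j 1)
  else fderiv ℝ (fun q => S t q0 q) q1 (Pi.single j 1)

/-!
Integrate `h_γ(ξ, ζ)` by parts: with `Φ(τ) = ξ^i ζ̇^i + (∂B_i/∂q^j)(γ) ξ^i ζ^j`, the product
rule and the symmetry of the second derivatives of `B` give
`Φ' = (integrand of h_γ(ξ, ζ)) + ξ^i D_γ[ζ]^i`. As `ξ` vanishes at both ends so does `Φ`, hence
`h_γ(ξ, ζ) = -∫ ξ^i D_γ[ζ]^i`. The integrand of `h_γ` is symmetric in `ξ, ζ` (again by symmetry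
of second derivatives), which gives the other two identities.
-/

lemma ContinuousLinearMap.apply_eq_sum_pi_single {ι : Type*} [Fintype ι] [DecidableEq ι]
    (L : (ι → ℝ) →L[ℝ] ℝ) (v : ι → ℝ) : L v = ∑ k, v k * L (Pi.single k 1) := by
  conv_lhs => rw [pi_eq_sum_univ' v]
  simp [map_sum]

section

variable {n : ℕ}

lemma contDiff_pd {m : WithTop ℕ∞} {f : (Fin n → ℝ) → ℝ} (hf : ContDiff ℝ (m + 1) f)
    (j : Fin n) : ContDiff ℝ m (pd f j) :=
  (hf.fderiv_right le_rfl).clm_apply contDiff_const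

lemma continuous_pd_pd {f : (Fin n → ℝ) → ℝ} (hf : ContDiff ℝ 2 f) (j k : Fin n) :
    Continuous (pd (pd f j) k) :=
  (contDiff_pd (m := 0) (contDiff_pd (m := 1) hf j) k).continuous

lemma pd_sub {f g : (Fin n → ℝ) → ℝ} {q : Fin n → ℝ} (hf : DifferentiableAt ℝ f q)
    (hg : DifferentiableAt ℝ g q) (j : Fin n) :
    pd (fun x => f x - g x) j q = pd f j q - pd g j q := by
  simp [pd, fderiv_fun_sub hf hg]

lemma pd_pd_comm {f : (Fin n → ℝ) → ℝ} {q : Fin n → ℝ} (hf : ContDiffAt ℝ 2 f q) (j k : Fin n) :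
    pd (pd f j) k q = pd (pd f k) j q := by
  have hsymm : IsSymmSndFDerivAt ℝ f q :=
    hf.isSymmSndFDerivAt (by simp [minSmoothness_of_isRCLikeNormedField])
  have hd : DifferentiableAt ℝ (fderiv ℝ f) q :=
    (hf.fderiv_right (m := 1) le_rfl).differentiableAt one_ne_zero
  have hpd : ∀ u w, fderiv ℝ (fun y => fderiv ℝ f y u) q w = fderiv ℝ (fderiv ℝ f) q w u := by
    intro u w
    simp [fderiv_clm_apply hd (differentiableAt_const u)]
  unfold pd
  rw [hpd, hpd]
  exact hsymm _ _

lemma hasDerivAt_comp_eq_sum_pd {g : (Fin n → ℝ) → ℝ} {γ : ℝ → Fin n → ℝ} {τ : ℝ}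
    (hg : DifferentiableAt ℝ g (γ τ)) (hγ : DifferentiableAt ℝ γ τ) :
    HasDerivAt (fun s => g (γ s)) (∑ k, pd g k (γ τ) * deriv γ τ k) τ := by
  refine (hg.hasFDerivAt.comp_hasDerivAt τ hγ.hasDerivAt).congr_deriv ?_
  rw [ContinuousLinearMap.apply_eq_sum_pi_single]
  simp only [pd, mul_comm]

lemma sum_sum_congr {f g : Fin n → Fin n → ℝ} (h : ∀ i j, f i j = g i j) :
    ∑ i, ∑ j, f i j = ∑ i, ∑ j, g i j :=
  Finset.sum_congr rfl fun i _ => Finset.sum_congr rfl fun j _ => h i j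

-- Pointwise form of the integration by parts, with `P = ∂B`, `Q = ∂²B`, `R = ∂²C` along `γ`.
lemma integration_by_parts_sum_identity (P R : Fin n → Fin n → ℝ) (Q : Fin n → Fin n → Fin n → ℝ)
    (hQ : ∀ i j k, Q i j k = Q i k j) (x y x' y' y'' g : Fin n → ℝ) :
    (∑ i, (x' i * y' i + x i * y'' i))
      + ∑ i, ∑ j, ((∑ k, Q i j k * g k) * (x i * y j) + P i j * (x' i * y j + x i * y' j))
    = (∑ i, x' i * y' i)
      + (∑ i, ∑ j, P i j * (x' i * y j + y' i * x j))
      + (∑ j, ∑ k, ((∑ i, Q i j k * g i) - R j k) * (x j * y k))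
      + ∑ i, x i * (y'' i + (∑ j, (P i j - P j i) * y' j)
          + ∑ j, ((∑ k, (Q i k j - Q k i j) * g k) + R i j) * y j) := by
  have h1 : ∑ i, ∑ j, P i j * (x i * y' j) = ∑ i, ∑ j, x i * (P i j * y' j) :=
    sum_sum_congr fun i j => by ring
  have h2 : ∑ i, ∑ j, P i j * (y' i * x j) = ∑ i, ∑ j, x i * (P j i * y' j) := by
    rw [Finset.sum_comm]; exact sum_sum_congr fun i j => by ring
  have h3 : ∑ i, ∑ j, ∑ k, Q i j k * g k * (x i * y j)
      = ∑ i, ∑ j, ∑ k, x i * (Q i k j * g k * y j) :=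
    sum_sum_congr fun i j => Finset.sum_congr rfl fun k _ => by rw [hQ]; ring
  have h4 : ∑ i, ∑ j, ∑ k, Q k i j * g k * (x i * y j)
      = ∑ i, ∑ j, ∑ k, x i * (Q k i j * g k * y j) :=
    sum_sum_congr fun i j => Finset.sum_congr rfl fun k _ => by ring
  have h5 : ∑ i, ∑ j, R i j * (x i * y j) = ∑ i, ∑ j, x i * (R i j * y j) :=
    sum_sum_congr fun i j => by ring
  simp only [mul_add, add_mul, sub_mul, mul_sub, Finset.sum_add_distrib,
    Finset.sum_sub_distrib, Finset.mul_sum, Finset.sum_mul]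
  linear_combination h1 - h2 + h3 - h4 + h5

def hessDensity (B : Fin n → (Fin n → ℝ) → ℝ) (C : (Fin n → ℝ) → ℝ)
    (γ ξ ζ : ℝ → Fin n → ℝ) (τ : ℝ) : ℝ :=
  (∑ i, deriv ξ τ i * deriv ζ τ i)
    + (∑ i, ∑ j, pd (B i) j (γ τ) * (deriv ξ τ i * ζ τ j + deriv ζ τ i * ξ τ j))
    + ∑ j, ∑ k,
        ((∑ i, pd (pd (B i) j) k (γ τ) * deriv γ τ i) - pd (pd C j) k (γ τ)) * (ξ τ j * ζ τ k)

def boundaryTerm (B : Fin n → (Fin n → ℝ) → ℝ) (γ ξ ζ : ℝ → Fin n → ℝ) (τ : ℝ) : ℝ :=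
  (∑ i, ξ τ i * deriv ζ τ i) + ∑ i, ∑ j, pd (B i) j (γ τ) * (ξ τ i * ζ τ j)

variable {B : Fin n → (Fin n → ℝ) → ℝ} {C : (Fin n → ℝ) → ℝ} {γ ξ ζ : ℝ → Fin n → ℝ}

lemma hess_eq_integral_hessDensity (t : ℝ) :
    hess B C t γ ξ ζ = ∫ τ in (0:ℝ)..t, hessDensity B C γ ξ ζ τ :=
  rfl

lemma hessDensity_comm (hB : ∀ i, ContDiff ℝ 2 (B i)) (hC : ContDiff ℝ 2 C) (τ : ℝ) :
    hessDensity B C γ ξ ζ τ = hessDensity B C γ ζ ξ τ := by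
  have hBsymm : ∀ i j k, pd (pd (B i) k) j (γ τ) = pd (pd (B i) j) k (γ τ) :=
    fun i j k => pd_pd_comm (hB i).contDiffAt k j
  have hCsymm : ∀ j k, pd (pd C k) j (γ τ) = pd (pd C j) k (γ τ) :=
    fun j k => pd_pd_comm hC.contDiffAt k j
  unfold hessDensity
  congr 1
  · congr 1
    · exact Finset.sum_congr rfl fun i _ => mul_comm _ _
    · exact sum_sum_congr fun i j => by ring
  · rw [Finset.sum_comm]
    refine sum_sum_congr fun j k => ?_
    simp only [hBsymm, hCsymm]
    ring

lemma jacobi_eq (hB : ∀ i, ContDiff ℝ 2 (B i)) (τ : ℝ) (i : Fin n) :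
    Jacobi B C γ ζ τ i = deriv (deriv ζ) τ i
      + (∑ j, (pd (B i) j (γ τ) - pd (B j) i (γ τ)) * deriv ζ τ j)
      + ∑ j, ((∑ k, (pd (pd (B i) k) j (γ τ) - pd (pd (B k) i) j (γ τ)) * deriv γ τ k)
        + pd (pd C i) j (γ τ)) * ζ τ j := by
  have hdiff : ∀ i k, Differentiable ℝ (pd (B i) k) :=
    fun i k => (contDiff_pd (m := 1) (hB i) k).differentiable one_ne_zero
  simp only [Jacobi, pd_sub ((hdiff _ _) _) ((hdiff _ _) _)]

lemma hasDerivAt_boundaryTerm (hB : ∀ i, ContDiff ℝ 2 (B i)) (hγ : Differentiable ℝ γ)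
    (hξ : Differentiable ℝ ξ) (hζ : Differentiable ℝ ζ) (hζ' : Differentiable ℝ (deriv ζ))
    (τ : ℝ) :
    HasDerivAt (boundaryTerm B γ ξ ζ)
      (hessDensity B C γ ξ ζ τ + ∑ i, ξ τ i * Jacobi B C γ ζ τ i) τ := by
  have hξi := hasDerivAt_pi.1 (hξ τ).hasDerivAt
  have hζi := hasDerivAt_pi.1 (hζ τ).hasDerivAt
  have hζ'i := hasDerivAt_pi.1 (hζ' τ).hasDerivAt
  have hP : ∀ i j, HasDerivAt (fun s => pd (B i) j (γ s))
      (∑ k, pd (pd (B i) j) k (γ τ) * deriv γ τ k) τ := fun i j =>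
    hasDerivAt_comp_eq_sum_pd
      ((contDiff_pd (m := 1) (hB i) j).differentiable one_ne_zero _) (hγ τ)
  have hΦ' : hessDensity B C γ ξ ζ τ + ∑ i, ξ τ i * Jacobi B C γ ζ τ i
      = (∑ i, (deriv ξ τ i * deriv ζ τ i + ξ τ i * deriv (deriv ζ) τ i))
        + ∑ i, ∑ j, ((∑ k, pd (pd (B i) j) k (γ τ) * deriv γ τ k) * (ξ τ i * ζ τ j)
          + pd (B i) j (γ τ) * (deriv ξ τ i * ζ τ j + ξ τ i * deriv ζ τ j)) := by
    simp only [hessDensity, jacobi_eq hB]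
    exact (integration_by_parts_sum_identity (fun i j => pd (B i) j (γ τ))
      (fun i j => pd (pd C i) j (γ τ)) (fun i j k => pd (pd (B i) j) k (γ τ))
      (fun i j k => pd_pd_comm (hB i).contDiffAt j k)
      (ξ τ) (ζ τ) (deriv ξ τ) (deriv ζ τ) (deriv (deriv ζ) τ) (deriv γ τ)).symm
  rw [hΦ']
  exact (HasDerivAt.fun_sum fun i _ => (hξi i).mul (hζ'i i)).add
    (HasDerivAt.fun_sum fun i _ => HasDerivAt.fun_sum fun j _ =>
      (hP i j).mul ((hξi i).mul (hζi j)))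

lemma continuous_hessDensity (hB : ∀ i, ContDiff ℝ 2 (B i)) (hC : ContDiff ℝ 2 C)
    (hγ : ContDiff ℝ 1 γ) (hξ : ContDiff ℝ 1 ξ) (hζ : ContDiff ℝ 1 ζ) :
    Continuous (hessDensity B C γ ξ ζ) := by
  have hP := fun i => contDiff_pd (m := 1) (hB i)
  have hQ := fun i => continuous_pd_pd (hB i)
  have hR := continuous_pd_pd hC
  have hγ' := hγ.continuous_deriv le_rfl
  have hξ' := hξ.continuous_deriv le_rfl
  have hζ' := hζ.continuous_deriv le_rfl
  have hγc := hγ.continuous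
  have hξc := hξ.continuous
  have hζc := hζ.continuous
  unfold hessDensity
  fun_prop

lemma continuous_jacobi (hB : ∀ i, ContDiff ℝ 2 (B i)) (hC : ContDiff ℝ 2 C)
    (hγ : ContDiff ℝ 1 γ) (hζ : ContDiff ℝ 2 ζ) (i : Fin n) :
    Continuous fun τ => Jacobi B C γ ζ τ i := by
  have hP := fun i => contDiff_pd (m := 1) (hB i)
  have hQ := fun i => continuous_pd_pd (hB i)
  have hR := continuous_pd_pd hC
  have hγ' := hγ.continuous_deriv le_rfl
  have hζ' := hζ.continuous_deriv one_le_two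
  have hζ'' := (hζ.iterate_deriv' 0 2).continuous
  have hγc := hγ.continuous
  have hζc := hζ.continuous
  simp only [jacobi_eq hB]
  fun_prop

theorem hess_eq_neg_integral_inner_jacobi (hB : ∀ i, ContDiff ℝ 2 (B i)) (hC : ContDiff ℝ 2 C)
    (hγ : ContDiff ℝ 1 γ) (hξ : ContDiff ℝ 1 ξ) (hζ : ContDiff ℝ 2 ζ) {t : ℝ}
    (hξ0 : ξ 0 = 0) (hξt : ξ t = 0) :
    hess B C t γ ξ ζ = -∫ τ in (0:ℝ)..t, ∑ i, ξ τ i * Jacobi B C γ ζ τ i := by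
  have hζ' : ContDiff ℝ 1 (deriv ζ) := (contDiff_succ_iff_deriv.1 hζ).2.2
  have hdensity : IntervalIntegrable (hessDensity B C γ ξ ζ) volume 0 t :=
    (continuous_hessDensity hB hC hγ hξ (hζ.of_le one_le_two)).intervalIntegrable 0 t
  have hpairing : IntervalIntegrable (fun τ => ∑ i, ξ τ i * Jacobi B C γ ζ τ i) volume 0 t := by
    have hξc := hξ.continuous
    have hJ := continuous_jacobi hB hC hγ hζ
    exact Continuous.intervalIntegrable (by fun_prop) 0 t
  have hftc := intervalIntegral.integral_eq_sub_of_hasDerivAt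
    (fun τ _ => hasDerivAt_boundaryTerm hB (hγ.differentiable one_ne_zero)
      (hξ.differentiable one_ne_zero) (hζ.differentiable two_ne_zero)
      (hζ'.differentiable one_ne_zero) τ) (hdensity.add hpairing)
  have hbdry : ∀ τ, ξ τ = 0 → boundaryTerm B γ ξ ζ τ = 0 := fun τ hτ => by
    simp [boundaryTerm, hτ]
  rw [intervalIntegral.integral_add hdensity hpairing, hbdry t hξt, hbdry 0 hξ0] at hftc
  rw [hess_eq_integral_hessDensity]
  linarith

lemma hess_comm (hB : ∀ i, ContDiff ℝ 2 (B i)) (hC : ContDiff ℝ 2 C) (t : ℝ) :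
    hess B C t γ ξ ζ = hess B C t γ ζ ξ := by
  simp only [hess_eq_integral_hessDensity, hessDensity_comm hB hC]

end

theorem statement8_general {n : ℕ}
    (B : Fin n → (Fin n → ℝ) → ℝ) (C : (Fin n → ℝ) → ℝ)
    (hB : ∀ i, ContDiff ℝ (⊤ : ℕ∞) (B i)) (hC : ContDiff ℝ (⊤ : ℕ∞) C)
    (t : ℝ) (γ ξ ζ : ℝ → Fin n → ℝ)
    (hγ : ContDiff ℝ (⊤ : ℕ∞) γ) (hξ : ContDiff ℝ (⊤ : ℕ∞) ξ)
    (hζ : ContDiff ℝ (⊤ : ℕ∞) ζ)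
    (hξ0 : ξ 0 = 0) (hξt : ξ t = 0) (hζ0 : ζ 0 = 0) (hζt : ζ t = 0) :
    hess B C t γ ξ ζ = -∫ τ in (0:ℝ)..t, ∑ i, ξ τ i * Jacobi B C γ ζ τ i ∧
    hess B C t γ ξ ζ = -∫ τ in (0:ℝ)..t, ∑ i, Jacobi B C γ ξ τ i * ζ τ i ∧
    (∫ τ in (0:ℝ)..t, ∑ i, ξ τ i * Jacobi B C γ ζ τ i)
      = ∫ τ in (0:ℝ)..t, ∑ i, Jacobi B C γ ξ τ i * ζ τ i := by
  have hB2 : ∀ i, ContDiff ℝ 2 (B i) := fun i => contDiff_infty.1 (hB i) 2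
  have hC2 : ContDiff ℝ 2 C := contDiff_infty.1 hC 2
  have hγ1 : ContDiff ℝ 1 γ := contDiff_infty.1 hγ 1
  have hξζ := hess_eq_neg_integral_inner_jacobi hB2 hC2 hγ1
    (contDiff_infty.1 hξ 1) (contDiff_infty.1 hζ 2) hξ0 hξt
  have hζξ : hess B C t γ ξ ζ = -∫ τ in (0:ℝ)..t, ∑ i, Jacobi B C γ ξ τ i * ζ τ i := by
    rw [hess_comm hB2 hC2, hess_eq_neg_integral_inner_jacobi hB2 hC2 hγ1
      (contDiff_infty.1 hζ 1) (contDiff_infty.1 hξ 2) hζ0 hζt]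
    simp only [mul_comm]
  exact ⟨hξζ, hζξ, neg_injective (hξζ.symm.trans hζξ)⟩

/-- on based loops the Hessian of the action is given by the Jacobi
operator, which is formally self-adjoint. -/
theorem statement8 {n : ℕ} (hn : 1 ≤ n)
    (B : Fin n → (Fin n → ℝ) → ℝ) (C : (Fin n → ℝ) → ℝ)
    (hB : ∀ i, ContDiff ℝ (⊤ : ℕ∞) (B i)) (hC : ContDiff ℝ (⊤ : ℕ∞) C)
    (t : ℝ) (ht : 0 < t) (γ ξ ζ : ℝ → Fin n → ℝ)
    (hγ : ContDiff ℝ (⊤ : ℕ∞) γ) (hξ : ContDiff ℝ (⊤ : ℕ∞) ξ)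
    (hζ : ContDiff ℝ (⊤ : ℕ∞) ζ)
    (hξ0 : ξ 0 = 0) (hξt : ξ t = 0) (hζ0 : ζ 0 = 0) (hζt : ζ t = 0) :
    hess B C t γ ξ ζ = -∫ τ in (0:ℝ)..t, ∑ i, ξ τ i * Jacobi B C γ ζ τ i ∧
    hess B C t γ ξ ζ = -∫ τ in (0:ℝ)..t, ∑ i, Jacobi B C γ ξ τ i * ζ τ i ∧
    (∫ τ in (0:ℝ)..t, ∑ i, ξ τ i * Jacobi B C γ ζ τ i)
      = ∫ τ in (0:ℝ)..t, ∑ i, Jacobi B C γ ξ τ i * ζ τ i :=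
  statement8_general B C hB hC t γ ξ ζ hγ hξ hζ hξ0 hξt hζ0 hζt
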